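/- arXiv:1912.07566 — 2 statements merged into one kernel-verified Lean document; each statement's English description precedes it below -/
import Mathlib

section
/- For every real D > 7·10⁶ one has S(D) < (√3/2)·D² + D/(2√3) − 1. -/
set_option maxHeartbeats 1000000
set_option linter.unusedVariables false

/-- Difference of two lattice points. -/
def sub2 (P Q : ℤ × ℤ) : ℤ × ℤ := (P.1 - Q.1, P.2 - Q.2)

/-- Determinant of two lattice vectors. -/
def det2 (u v : ℤ × ℤ) : ℤ := u.1 * v.2 - u.2 * v.1

/-- Dot product of two lattice vectors. -/
def dot2 (u v : ℤ × ℤ) : ℤ := u.1 * v.1 + u.2 * v.2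

/-- Squared Euclidean norm of a lattice vector. -/
def normSq2 (u : ℤ × ℤ) : ℤ := u.1 ^ 2 + u.2 ^ 2

/-- Membership in `𝒯(D)`: a non-degenerate lattice triangle with all three side
lengths at least `D` and all three angles at most `π/2` (for a non-degenerate
triangle, the angle at a vertex is at most `π/2` iff the dot product of the two
edge vectors emanating from that vertex is nonnegative). -/
def InT (D : ℝ) (P Q R : ℤ × ℤ) : Prop :=
  det2 (sub2 Q P) (sub2 R P) ≠ 0 ∧
  D ≤ Real.sqrt (normSq2 (sub2 Q P)) ∧
  D ≤ Real.sqrt (normSq2 (sub2 R Q)) ∧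
  D ≤ Real.sqrt (normSq2 (sub2 P R)) ∧
  0 ≤ dot2 (sub2 Q P) (sub2 R P) ∧
  0 ≤ dot2 (sub2 P Q) (sub2 R Q) ∧
  0 ≤ dot2 (sub2 P R) (sub2 Q R)

/-- Twice the area of a lattice triangle, `|det (Q - P, R - P)|`, a natural number. -/
def twiceArea (P Q R : ℤ × ℤ) : ℕ := (det2 (sub2 Q P) (sub2 R P)).natAbs

/-- `S D` is twice the minimal area of a triangle in `𝒯(D)`. -/
noncomputable def S (D : ℝ) : ℕ :=
  sInf {n : ℕ | ∃ P Q R : ℤ × ℤ, InT D P Q R ∧ n = twiceArea P Q R}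


noncomputable def BB (D : ℝ) : ℝ := Real.sqrt 3 / 2 * D ^ 2 + D / (2 * Real.sqrt 3) - 1

lemma sqrt3_facts : (Real.sqrt 3) ^ 2 = 3 ∧ (1.7:ℝ) < Real.sqrt 3 ∧ Real.sqrt 3 < 1.8 := by
  have h3 : (Real.sqrt 3) ^ 2 = 3 := Real.sq_sqrt (by norm_num)
  refine ⟨h3, ?_, ?_⟩ <;> nlinarith [Real.sqrt_nonneg 3]

lemma real_main (D a b c dt dp : ℝ) (hD : 7 * 10 ^ 6 < D)
    (h1 : D ^ 2 ≤ a) (h2 : D ^ 2 ≤ b) (h3 : D ^ 2 ≤ c)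
    (hsum : a + b + c ≤ 3 * D ^ 2 + D - 4)
    (hlag : dt ^ 2 + dp ^ 2 = a * c)
    (hd1 : 2 * dp = a + c - b) :
    (0 < a + c - b ∧ 0 < a + b - c ∧ 0 < b + c - a) ∧ 0 < dt ^ 2 ∧ |dt| < BB D := by
  obtain ⟨hs3, hs_lb, hs_ub⟩ := sqrt3_facts
  set s : ℝ := Real.sqrt 3 with hs
  have hD0 : (0:ℝ) < D := by nlinarith
  have hub1 : a ≤ D^2 + D - 4 := by linarith
  have hub2 : b ≤ D^2 + D - 4 := by linarith
  have hub3 : c ≤ D^2 + D - 4 := by linarith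
  have hz1 : (0:ℝ) < a + c - b := by nlinarith
  have hz2 : (0:ℝ) < a + b - c := by nlinarith
  have hz3 : (0:ℝ) < b + c - a := by nlinarith
  have hkey : (a + c - b)^2 < 4 * (a * c) := by nlinarith
  have hdet2pos : (0:ℝ) < dt ^ 2 := by nlinarith
  have harea : 12 * dt^2 ≤ (a + b + c)^2 := by
    nlinarith [sq_nonneg (a + c - 2*b), sq_nonneg (a - c)]
  have hspos : (0:ℝ) < s := by linarith
  have hdiv : 2 * s * (D / (2 * s)) = D := by field_simp
  have hBval : 2 * s * (BB D) = 3 * D^2 + D - 2*s := by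
    have expand : 2 * s * (BB D)
        = s ^ 2 * D ^ 2 + 2 * s * (D / (2*s)) - 2 * s := by
      rw [BB, ← hs]; ring
    rw [expand, hdiv, hs3]
  have hsD2 : 1.7 * D^2 < s * D^2 := by
    apply mul_lt_mul_of_pos_right hs_lb
    positivity
  have hD2big : (2:ℝ) < D^2 := by nlinarith
  have hdivpos : 0 < D / (2*s) := by positivity
  have hBpos : (0:ℝ) < BB D := by
    have hform : BB D = s * D^2 / 2 + D / (2*s) - 1 := by
      rw [BB, ← hs]; ring
    rw [hform]
    linarith
  have hsum4 : a + b + c < 3 * D^2 + D - 2*s := by nlinarith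
  have hsumpos : (0:ℝ) < a + b + c := by nlinarith
  have h12 : (12:ℝ) = (2*s)^2 := by nlinarith
  have habs2 : dt^2 < (BB D)^2 := by
    have hh : (2*s)^2 * dt^2 ≤ (a+b+c)^2 := by rw [← h12]; linarith
    have hx2 : (a+b+c)^2 < (3*D^2 + D - 2*s)^2 := by
      have hT0 : 0 < 3*D^2 + D - 2*s := by linarith
      have := mul_self_lt_mul_self hsumpos.le hsum4
      nlinarith [this]
    have hx3 : (2*s)^2 * dt^2 < (2 * s * (BB D))^2 := by
      rw [hBval]; linarith
    have hx4 : (2 * s * (BB D))^2 = (2*s)^2 * (BB D)^2 := by ring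
    rw [hx4] at hx3
    have hpos : (0:ℝ) < (2*s)^2 := by positivity
    exact (mul_lt_mul_iff_right₀ hpos).mp hx3
  have habs : |dt| < BB D := by
    exact abs_lt_of_sq_lt_sq habs2 hBpos.le
  exact ⟨⟨hz1, hz2, hz3⟩, hdet2pos, habs⟩




lemma sqrt3_bounds : 1.7320508 ≤ Real.sqrt 3 ∧ Real.sqrt 3 ≤ 1.7320509 := by
  have h3 : (Real.sqrt 3) ^ 2 = 3 := Real.sq_sqrt (by norm_num)
  constructor <;> nlinarith [Real.sqrt_nonneg 3]

/-- 5-point coverage by the rotation `2 - √3`. -/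
lemma F2 (y : ℝ) : ∃ t q : ℤ, 0 ≤ t ∧ t ≤ 4 ∧
    |(q:ℝ) - (y - Real.sqrt 3 * t)| ≤ 0.14 := by
  obtain ⟨hlo, hhi⟩ := sqrt3_bounds
  set u : ℝ := Int.fract y with hu
  have hu0 : 0 ≤ u := Int.fract_nonneg y
  have hu1 : u < 1 := Int.fract_lt_one y
  have hyu : y = ⌊y⌋ + u := by rw [hu]; exact (Int.floor_add_fract y).symm
  rcases le_or_gt u 0.14 with h | h
  · exact ⟨0, ⌊y⌋, by norm_num, by norm_num, by
      rw [abs_le]; push_cast; constructor <;> nlinarith⟩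
  rcases le_or_gt u 0.336 with h2 | h2
  · exact ⟨3, ⌊y⌋ - 5, by norm_num, by norm_num, by
      rw [abs_le]; push_cast; constructor <;> nlinarith⟩
  rcases le_or_gt u 0.604 with h3 | h3
  · exact ⟨2, ⌊y⌋ - 3, by norm_num, by norm_num, by
      rw [abs_le]; push_cast; constructor <;> nlinarith⟩
  rcases le_or_gt u 0.872 with h4 | h4
  · exact ⟨1, ⌊y⌋ - 1, by norm_num, by norm_num, by
      rw [abs_le]; push_cast; constructor <;> nlinarith⟩
  · exact ⟨4, ⌊y⌋ - 6, by norm_num, by norm_num, by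
      rw [abs_le]; push_cast; constructor <;> nlinarith⟩

/-- 8-point coverage for the height phase. -/
lemma F1 (x : ℝ) : ∃ j p K : ℤ, 0 ≤ j ∧ j ≤ 3 ∧ (p = 0 ∨ p = 1) ∧
    0.76 ≤ x - j * (Real.sqrt 3 / 2) + p / 2 + K ∧
    x - j * (Real.sqrt 3 / 2) + p / 2 + K ≤ 0.91 := by
  obtain ⟨hlo, hhi⟩ := sqrt3_bounds
  set u : ℝ := Int.fract x with hu
  have hu0 : 0 ≤ u := Int.fract_nonneg x
  have hu1 : u < 1 := Int.fract_lt_one x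
  have hyu : x = ⌊x⌋ + u := by rw [hu]; exact (Int.floor_add_fract x).symm
  rcases le_or_gt u 0.142 with h | h
  · exact ⟨2, 1, 2 - ⌊x⌋, by norm_num, by norm_num, Or.inr rfl, by
      push_cast; constructor <;> nlinarith⟩
  rcases le_or_gt u 0.276 with h2 | h2
  · exact ⟨1, 1, 1 - ⌊x⌋, by norm_num, by norm_num, Or.inr rfl, by
      push_cast; constructor <;> nlinarith⟩
  rcases le_or_gt u 0.41 with h3 | h3
  · exact ⟨0, 1, 0 - ⌊x⌋, by norm_num, by norm_num, Or.inr rfl, by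
      push_cast; constructor <;> nlinarith⟩
  rcases le_or_gt u 0.508 with h4 | h4
  · exact ⟨3, 0, 3 - ⌊x⌋, by norm_num, by norm_num, Or.inl rfl, by
      push_cast; constructor <;> nlinarith⟩
  rcases le_or_gt u 0.642 with h5 | h5
  · exact ⟨2, 0, 2 - ⌊x⌋, by norm_num, by norm_num, Or.inl rfl, by
      push_cast; constructor <;> nlinarith⟩
  rcases le_or_gt u 0.776 with h6 | h6
  · exact ⟨1, 0, 1 - ⌊x⌋, by norm_num, by norm_num, Or.inl rfl, by
      push_cast; constructor <;> nlinarith⟩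
  rcases le_or_gt u 0.91 with h7 | h7
  · exact ⟨0, 0, 0 - ⌊x⌋, by norm_num, by norm_num, Or.inl rfl, by
      push_cast; constructor <;> nlinarith⟩
  · exact ⟨3, 1, 2 - ⌊x⌋, by norm_num, by norm_num, Or.inr rfl, by
      push_cast; constructor <;> nlinarith⟩


/-- inequality for M₁ -/
lemma keyM1 (DD M E S Xi Z : ℝ)
    (hM3 : DD^2 ≤ M^2 + E^2)
    (hXi : -0.14 ≤ Xi) (hXiu : Xi ≤ 0.14)
    (hZ : 0.09 ≤ Z)
    (hSml : 1.7320508 * M ≤ S * M)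
    (hSE0 : 0 ≤ S * E)
    (hSew : S * E ≤ 1.7320509 * (DD/500 + 10))
    (hMlb : DD - 4 ≤ M) (hDD : 7 * 10 ^ 6 < DD) (hE0 : 0 ≤ E) :
    DD^2 ≤ (M^2 + E^2) + (M - S*E)*Xi + (S*M + E)*Z + Xi^2 + Z^2 := by
  have hA : (0:ℝ) ≤ M - S*E := by nlinarith
  have hB : (0:ℝ) ≤ S*M + E := by nlinarith
  nlinarith [mul_nonneg hA (by linarith : (0:ℝ) ≤ Xi + 0.14),
             mul_nonneg hB (by linarith : (0:ℝ) ≤ Z - 0.09),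
             sq_nonneg Xi, sq_nonneg Z]

/-- inequality for M₂ -/
lemma keyM2 (DD M E S Xi Z : ℝ)
    (hM3 : DD^2 ≤ M^2 + E^2)
    (hXi : -0.14 ≤ Xi) (hXiu : Xi ≤ 0.14)
    (hZ : 0.09 ≤ Z)
    (hSml : 1.7320508 * M ≤ S * M)
    (hSE0 : 0 ≤ S * E)
    (hSew : S * E ≤ 1.7320509 * (DD/500 + 10))
    (hMlb : DD - 4 ≤ M) (hMub : M ≤ DD) (hDD : 7 * 10 ^ 6 < DD)
    (hE0 : 0 ≤ E) (hEub : E ≤ DD/500 + 10) :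
    DD^2 ≤ (M^2 + E^2) - (M + S*E)*Xi + (S*M - E)*Z + Xi^2 + Z^2 := by
  have hB : (0:ℝ) ≤ S*M - E := by nlinarith
  have hA : (0:ℝ) ≤ M + S*E := by nlinarith
  nlinarith [mul_nonneg hA (by linarith : (0:ℝ) ≤ 0.14 - Xi),
             mul_nonneg hB (by linarith : (0:ℝ) ≤ Z - 0.09),
             sq_nonneg Xi, sq_nonneg Z]

/-- sum bound -/
lemma keySum (DD M E S Xi Z : ℝ)
    (hm3 : M^2 + E^2 - DD^2 ≤ 0.04*DD + 100)
    (hXi : -0.14 ≤ Xi) (hXiu : Xi ≤ 0.14)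
    (hZ : 0.09 ≤ Z) (hZu : Z ≤ 0.24)
    (hSE0 : 0 ≤ S * E)
    (hSew : S * E ≤ 1.7320509 * (DD/500 + 10))
    (hSm0 : 0 ≤ S * M)
    (hSmu : S * M ≤ 1.7320509 * DD)
    (hDD : 7 * 10 ^ 6 < DD) :
    ((M^2 + E^2) + (M - S*E)*Xi + (S*M + E)*Z + Xi^2 + Z^2)
    + ((M^2 + E^2) - (M + S*E)*Xi + (S*M - E)*Z + Xi^2 + Z^2)
    + (M^2 + E^2) ≤ 3*DD^2 + DD - 4 := by
  have e1 : ((M^2 + E^2) + (M - S*E)*Xi + (S*M + E)*Z + Xi^2 + Z^2)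
      + ((M^2 + E^2) - (M + S*E)*Xi + (S*M - E)*Z + Xi^2 + Z^2)
      + (M^2 + E^2)
      = 3*(M^2+E^2) - 2*(S*E)*Xi + 2*(S*M)*Z + 2*Xi^2 + 2*Z^2 := by ring
  rw [e1]
  have b1 : -2*(S*E)*Xi ≤ 2 * (1.7320509 * (DD/500 + 10)) * 0.14 := by
    nlinarith [mul_nonneg hSE0 (by linarith : (0:ℝ) ≤ 0.14 + Xi)]
  have b2 : 2*(S*M)*Z ≤ 2 * (1.7320509 * DD) * 0.24 := by
    nlinarith [mul_nonneg hSm0 (by linarith : (0:ℝ) ≤ 0.24 - Z)]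
  have b3 : Xi^2 ≤ 0.0196 := by nlinarith
  have b4 : Z^2 ≤ 0.0576 := by nlinarith
  nlinarith


lemma core_exists (D : ℝ) (hD : 7 * 10 ^ 6 < D) :
    ∃ n e q₁ q₂ : ℤ,
      D ^ 2 ≤ ((q₁ ^ 2 + q₂ ^ 2 : ℤ) : ℝ) ∧
      D ^ 2 ≤ (((q₁ - n) ^ 2 + (q₂ - e) ^ 2 : ℤ) : ℝ) ∧
      D ^ 2 ≤ ((n ^ 2 + e ^ 2 : ℤ) : ℝ) ∧
      (((q₁ ^ 2 + q₂ ^ 2) + ((q₁ - n) ^ 2 + (q₂ - e) ^ 2) + (n ^ 2 + e ^ 2) : ℤ) : ℝ)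
        ≤ 3 * D ^ 2 + D - 4 := by
  obtain ⟨hlo, hhi⟩ := sqrt3_bounds
  have hs3 : (Real.sqrt 3) ^ 2 = 3 := Real.sq_sqrt (by norm_num)
  set s : ℝ := Real.sqrt 3 with hs
  have hD0 : (0:ℝ) < D := by nlinarith
  set m₀ : ℤ := ⌈D⌉ - 1 with hm₀
  obtain ⟨j, p, K, hj0, hj3, hp01, hw1, hw2⟩ := F1 (s * m₀ / 2)
  set m : ℤ := m₀ - j with hm
  have hmR : (m:ℝ) = (⌈D⌉:ℝ) - 1 - j := by rw [hm, hm₀]; push_cast; ring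
  have hmub : (m:ℝ) ≤ D := by
    have h1 : (⌈D⌉:ℝ) < D + 1 := by exact_mod_cast Int.ceil_lt_add_one D
    have h2 : (0:ℝ) ≤ (j:ℝ) := by exact_mod_cast hj0
    linarith [hmR]
  have hmlb : D - 4 ≤ (m:ℝ) := by
    have h1 : D ≤ (⌈D⌉:ℝ) := Int.le_ceil D
    have h2 : (j:ℝ) ≤ 3 := by exact_mod_cast hj3
    linarith [hmR]
  have hm0R : (0:ℝ) < m := by linarith
  have hDm : (0:ℝ) ≤ D^2 - (m:ℝ)^2 := by nlinarith
  set Er : ℝ := Real.sqrt (D^2 - (m:ℝ)^2) with hEr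
  have hEr0 : 0 ≤ Er := Real.sqrt_nonneg _
  have hEr2 : Er^2 = D^2 - (m:ℝ)^2 := Real.sq_sqrt hDm
  have hErub : Er ≤ D / 500 := by
    have h1 : Er^2 ≤ 8*D - 16 := by nlinarith
    have h2 : (Er - D/500) * (Er + D/500) ≤ 0 := by nlinarith
    nlinarith
  set r : ℤ := ⌈(Er - p) / 2⌉ with hr
  set e₀ : ℤ := p + 2 * r with he₀
  have hp0R : (0:ℝ) ≤ p := by rcases hp01 with h | h <;> simp [h]
  have hp1R : (p:ℝ) ≤ 1 := by rcases hp01 with h | h <;> simp [h]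
  have he₀R : (e₀:ℝ) = (p:ℝ) + 2*(r:ℝ) := by rw [he₀]; push_cast; ring
  have he₀lb : Er ≤ (e₀:ℝ) := by
    have h1 : (Er - p)/2 ≤ (r:ℝ) := Int.le_ceil _
    linarith [he₀R]
  have he₀ub : (e₀:ℝ) ≤ Er + 2 := by
    have h1 : (r:ℝ) < (Er - p)/2 + 1 := by exact_mod_cast Int.ceil_lt_add_one ((Er - p)/2)
    linarith [he₀R]
  obtain ⟨t, q₁, ht0, ht4, hq₁⟩ := F2 (((m:ℝ) - s * e₀) / 2)
  set e : ℤ := e₀ + 2 * t with he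
  have htR0 : (0:ℝ) ≤ t := by exact_mod_cast ht0
  have htR4 : (t:ℝ) ≤ 4 := by exact_mod_cast ht4
  have heE : (e:ℝ) = (e₀:ℝ) + 2*(t:ℝ) := by rw [he]; push_cast; ring
  have helb : Er ≤ (e:ℝ) := by linarith
  have heub : (e:ℝ) ≤ Er + 10 := by linarith
  have he0R : (0:ℝ) ≤ e := by linarith
  have heub2 : (e:ℝ) ≤ D/500 + 10 := by linarith
  set q₂ : ℤ := 1 - K + r + t with hq₂def
  set ξ : ℝ := (q₁:ℝ) - ((m:ℝ) - s * e) / 2 with hξ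
  set ζ : ℝ := (q₂:ℝ) - (s * m + e) / 2 with hζ
  have hξabs : |ξ| ≤ 0.14 := by
    have hyy : ((m:ℝ) - s * e) / 2 = ((m:ℝ) - s * e₀) / 2 - s * t := by
      rw [heE]; ring
    rw [hξ, hyy]
    exact hq₁
  have hζval : ζ = 1 - (s * m₀ / 2 - j * (s / 2) + p / 2 + K) := by
    rw [hζ, hq₂def, heE, he₀R]
    have hmm : (m:ℝ) = (m₀:ℝ) - j := by rw [hm]; push_cast; ring
    push_cast
    rw [hmm]
    ring
  have hζlb : 0.09 ≤ ζ := by rw [hζval]; linarith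
  have hζub : ζ ≤ 0.24 := by rw [hζval]; linarith
  have hξlb : -0.14 ≤ ξ := (abs_le.mp hξabs).1
  have hξub : ξ ≤ 0.14 := (abs_le.mp hξabs).2
  have hM₃lb : D^2 ≤ (m:ℝ)^2 + (e:ℝ)^2 := by nlinarith
  have hm₃ub : (m:ℝ)^2 + (e:ℝ)^2 - D^2 ≤ 0.04 * D + 100 := by nlinarith
  -- products
  have hSml : 1.7320508 * (m:ℝ) ≤ s * m := mul_le_mul_of_nonneg_right hlo hm0R.le
  have hSE0 : (0:ℝ) ≤ s * e := mul_nonneg (by linarith) he0R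
  have hSew : s * (e:ℝ) ≤ 1.7320509 * (D/500 + 10) :=
    mul_le_mul hhi heub2 he0R (by norm_num)
  have hSm0 : (0:ℝ) ≤ s * m := mul_nonneg (by linarith) hm0R.le
  have hSmu : s * (m:ℝ) ≤ 1.7320509 * D := mul_le_mul hhi hmub hm0R.le (by norm_num)
  -- identities
  have hq₁R : (q₁:ℝ) = ((m:ℝ) - s*e)/2 + ξ := by rw [hξ]; ring
  have hq₂R : (q₂:ℝ) = (s*(m:ℝ) + e)/2 + ζ := by rw [hζ]; ring
  have Id1 : (q₁:ℝ)^2 + (q₂:ℝ)^2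
      = ((m:ℝ)^2 + (e:ℝ)^2) + ((m:ℝ) - s*e)*ξ + (s*(m:ℝ) + e)*ζ + ξ^2 + ζ^2 := by
    rw [hq₁R, hq₂R]
    linear_combination (((m:ℝ)^2 + (e:ℝ)^2)/4) * hs3
  have Id2 : ((q₁:ℝ) - m)^2 + ((q₂:ℝ) - e)^2
      = ((m:ℝ)^2 + (e:ℝ)^2) - ((m:ℝ) + s*e)*ξ + (s*(m:ℝ) - e)*ζ + ξ^2 + ζ^2 := by
    rw [hq₁R, hq₂R]
    linear_combination (((m:ℝ)^2 + (e:ℝ)^2)/4) * hs3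
  have hM₁ : D^2 ≤ (q₁:ℝ)^2 + (q₂:ℝ)^2 := by
    rw [Id1]
    exact keyM1 D (m:ℝ) (e:ℝ) s ξ ζ hM₃lb hξlb hξub hζlb hSml hSE0 hSew hmlb hD he0R
  have hM₂ : D^2 ≤ ((q₁:ℝ) - m)^2 + ((q₂:ℝ) - e)^2 := by
    rw [Id2]
    exact keyM2 D (m:ℝ) (e:ℝ) s ξ ζ hM₃lb hξlb hξub hζlb hSml hSE0 hSew hmlb hmub hD he0R heub2
  have hSum : ((q₁:ℝ)^2 + (q₂:ℝ)^2) + (((q₁:ℝ) - m)^2 + ((q₂:ℝ) - e)^2)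
      + ((m:ℝ)^2 + (e:ℝ)^2) ≤ 3*D^2 + D - 4 := by
    rw [Id1, Id2]
    exact keySum D (m:ℝ) (e:ℝ) s ξ ζ hm₃ub hξlb hξub hζlb hζub hSE0 hSew hSm0 hSmu hD
  refine ⟨m, e, q₁, q₂, ?_, ?_, ?_, ?_⟩
  · push_cast; linarith [hM₁]
  · push_cast; linarith [hM₂]
  · push_cast; linarith [hM₃lb]
  · push_cast; linarith [hSum]


/-- For every real `D > 7·10⁶`, `S(D) < (√3/2)·D² + D/(2√3) − 1`. -/
theorem S_upper_bound_large_D (D : ℝ) (hD : 7 * 10 ^ 6 < D) :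
    (S D : ℝ) < Real.sqrt 3 / 2 * D ^ 2 + D / (2 * Real.sqrt 3) - 1 := by
  obtain ⟨n, e, q₁, q₂, h1, h2, h3, hsum⟩ := core_exists D hD
  have hD0 : (0:ℝ) < D := by nlinarith
  -- set up the triangle
  have hsum' : ((q₁ ^ 2 + q₂ ^ 2 : ℤ) : ℝ) + (((q₁ - n) ^ 2 + (q₂ - e) ^ 2 : ℤ) : ℝ)
      + ((n ^ 2 + e ^ 2 : ℤ) : ℝ) ≤ 3 * D ^ 2 + D - 4 := by
    push_cast at hsum ⊢; linarith
  have hlag : (((q₁ * e - q₂ * n : ℤ) : ℝ)) ^ 2 + (((q₁ * n + q₂ * e : ℤ) : ℝ)) ^ 2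
      = ((q₁ ^ 2 + q₂ ^ 2 : ℤ) : ℝ) * ((n ^ 2 + e ^ 2 : ℤ) : ℝ) := by
    push_cast; ring
  have hd1 : 2 * (((q₁ * n + q₂ * e : ℤ) : ℝ))
      = ((q₁ ^ 2 + q₂ ^ 2 : ℤ) : ℝ) + ((n ^ 2 + e ^ 2 : ℤ) : ℝ)
        - (((q₁ - n) ^ 2 + (q₂ - e) ^ 2 : ℤ) : ℝ) := by
    push_cast; ring
  obtain ⟨⟨hz1, hz2, hz3⟩, hdt2, habs⟩ :=
    real_main D ((q₁ ^ 2 + q₂ ^ 2 : ℤ) : ℝ) (((q₁ - n) ^ 2 + (q₂ - e) ^ 2 : ℤ) : ℝ)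
      ((n ^ 2 + e ^ 2 : ℤ) : ℝ)
      (((q₁ * e - q₂ * n : ℤ) : ℝ)) (((q₁ * n + q₂ * e : ℤ) : ℝ))
      hD h1 h2 h3 (by linarith) hlag hd1
  set P : ℤ × ℤ := (0, 0) with hP
  set Q : ℤ × ℤ := (q₁, q₂) with hQ
  set R : ℤ × ℤ := (n, e) with hR
  have edet : det2 (sub2 Q P) (sub2 R P) = q₁ * e - q₂ * n := by
    simp [det2, sub2, hQ, hP, hR]
  -- det ≠ 0
  have hdet_ne : det2 (sub2 Q P) (sub2 R P) ≠ 0 := by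
    rw [edet]
    intro h0
    rw [h0] at hdt2
    norm_num at hdt2
  -- sqrt side conditions
  have sqrt_side : ∀ x : ℤ, D^2 ≤ (x:ℝ) → D ≤ Real.sqrt (x:ℝ) := by
    intro x hx
    have hh : D = Real.sqrt (D^2) := (Real.sqrt_sq hD0.le).symm
    rw [hh]
    exact Real.sqrt_le_sqrt hx
  have e1 : (normSq2 (sub2 Q P) : ℤ) = q₁ ^ 2 + q₂ ^ 2 := by
    simp [normSq2, sub2, hQ, hP]
  have e2 : (normSq2 (sub2 R Q) : ℤ) = (q₁ - n) ^ 2 + (q₂ - e) ^ 2 := by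
    simp only [normSq2, sub2, hQ, hR]; ring
  have e3 : (normSq2 (sub2 P R) : ℤ) = n ^ 2 + e ^ 2 := by
    simp only [normSq2, sub2, hP, hR]; ring
  -- dot products
  have edot1 : (dot2 (sub2 Q P) (sub2 R P) : ℤ) = q₁ * n + q₂ * e := by
    simp [dot2, sub2, hQ, hP, hR]
  have edot2 : (2 * dot2 (sub2 P Q) (sub2 R Q) : ℤ)
      = (q₁^2+q₂^2) + ((q₁-n)^2+(q₂-e)^2) - (n^2+e^2) := by
    simp only [dot2, sub2, hQ, hP, hR]; ring
  have edot3 : (2 * dot2 (sub2 P R) (sub2 Q R) : ℤ)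
      = ((q₁-n)^2+(q₂-e)^2) + (n^2+e^2) - (q₁^2+q₂^2) := by
    simp only [dot2, sub2, hQ, hP, hR]; ring
  have hdot1 : 0 ≤ dot2 (sub2 Q P) (sub2 R P) := by
    rw [edot1]
    have hzz : (0:ℝ) ≤ ((q₁ * n + q₂ * e : ℤ) : ℝ) := by linarith
    exact_mod_cast hzz
  have hdot2 : 0 ≤ dot2 (sub2 P Q) (sub2 R Q) := by
    have hzz : (0:ℤ) < (q₁^2+q₂^2) + ((q₁-n)^2+(q₂-e)^2) - (n^2+e^2) := by
      exact_mod_cast hz2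
    omega
  have hdot3 : 0 ≤ dot2 (sub2 P R) (sub2 Q R) := by
    have hzz : (0:ℤ) < ((q₁-n)^2+(q₂-e)^2) + (n^2+e^2) - (q₁^2+q₂^2) := by
      exact_mod_cast hz3
    omega
  have hmem : twiceArea P Q R ∈
      {m : ℕ | ∃ P' Q' R' : ℤ × ℤ, InT D P' Q' R' ∧ m = twiceArea P' Q' R'} := by
    refine ⟨P, Q, R, ⟨hdet_ne, ?_, ?_, ?_, hdot1, hdot2, hdot3⟩, rfl⟩
    · rw [e1]; exact sqrt_side _ h1
    · rw [e2]; exact sqrt_side _ h2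
    · rw [e3]; exact sqrt_side _ h3
  have hSle : S D ≤ twiceArea P Q R := Nat.sInf_le hmem
  have hcast : ((twiceArea P Q R : ℕ) : ℝ) = |((q₁ * e - q₂ * n : ℤ) : ℝ)| := by
    rw [twiceArea, edet, Nat.cast_natAbs]
    norm_num
  have hfin : ((twiceArea P Q R : ℕ) : ℝ) < BB D := by
    rw [hcast]; exact habs
  have : (S D : ℝ) ≤ ((twiceArea P Q R : ℕ) : ℝ) := by exact_mod_cast hSle
  have : (S D : ℝ) < BB D := lt_of_le_of_lt this hfin
  rw [BB] at this
  exact this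
end

section
/- Let ε = (3√3 − 5)/2 and define f(N) = 49 + 14·(7√N − 49/4)^{1/2}. For every real N > 1000 there exist half-integers x, y (i.e., 2x, 2y ∈ ℤ) such that ‖x − √3·y‖ < ε, ‖y + √3·x‖ < ε/2, N ≤ x² + y² ≤ N + f(N), and moreover y ≤ 7 + (7√N − 49/4)^{1/2}. -/
/-- Distance from a real number to the nearest integer. -/
noncomputable def distNearestInt (x : ℝ) : ℝ := |x - round x|

private lemma sqrt3_lb : (1.732 : ℝ) < Real.sqrt 3 := by
  have h : (1.732 : ℝ) = Real.sqrt (1.732 ^ 2) := (Real.sqrt_sq (by norm_num)).symm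
  rw [h]
  exact Real.sqrt_lt_sqrt (by norm_num) (by norm_num)

private lemma sqrt3_ub : Real.sqrt 3 < (1.7321 : ℝ) := by
  have h : (1.7321 : ℝ) = Real.sqrt (1.7321 ^ 2) := (Real.sqrt_sq (by norm_num)).symm
  rw [h]
  exact Real.sqrt_lt_sqrt (by norm_num) (by norm_num)

private lemma irr3 : Irrational (Real.sqrt 3) := by
  have h : Nat.Prime 3 := by norm_num
  simpa using h.irrational_sqrt

private lemma sqrt3_mul_ne (a b : ℤ) (hb : b ≠ 0) : Real.sqrt 3 * (b : ℝ) ≠ (a : ℝ) := by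
  intro h
  have hbR : (b : ℝ) ≠ 0 := Int.cast_ne_zero.2 hb
  apply irr3
  refine ⟨(a : ℚ) / (b : ℚ), ?_⟩
  have hcast : (((a : ℚ) / (b : ℚ) : ℚ) : ℝ) = (a : ℝ) / (b : ℝ) := by norm_cast
  rw [hcast, div_eq_iff hbR]
  linarith [h]

private lemma round_eq_of_abs_sub_lt {z : ℝ} {n : ℤ} (h : |z - n| < 1/2) : round z = n := by
  have h' := abs_lt.1 h
  rw [round_eq]
  apply Int.floor_eq_iff.2
  constructor
  · linarith [h'.1]
  · linarith [h'.2]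

private lemma dni_lt {z : ℝ} {n : ℤ} {c : ℝ} (hc : c ≤ 1/2) (h : |z - n| < c) :
    distNearestInt z < c := by
  have hr : round z = n := round_eq_of_abs_sub_lt (lt_of_lt_of_le h hc)
  unfold distNearestInt
  rw [hr]
  exact h

/-- Master covering lemma: seven shifted windows of width `2ε` cover the circle. -/
private lemma master (p w : ℤ) (hp : 0 ≤ p) :
    ∃ d M : ℤ, 0 ≤ d ∧ d < 7 ∧
      |(Real.sqrt 3 * ((p : ℝ) + 2 * (d : ℝ)) - (w : ℝ)) / 2 - (M : ℝ)|
        < (3 * Real.sqrt 3 - 5) / 2 := by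
  have s3l : (1.732 : ℝ) < Real.sqrt 3 := sqrt3_lb
  have s3u : Real.sqrt 3 < 1.7321 := sqrt3_ub
  set t : ℝ := (Real.sqrt 3 * (p : ℝ) - (w : ℝ)) / 2 with ht
  set F : ℤ := ⌊t⌋ with hF
  set θ : ℝ := t - (F : ℝ) with hθ
  have hθ0 : 0 ≤ θ := by
    have := Int.floor_le t
    rw [hθ]; linarith
  have hθ1 : θ < 1 := by
    have := Int.lt_floor_add_one t
    rw [hθ]; linarith
  have key : ∀ d c : ℤ, 0 ≤ d → d < 7 →
      |θ + Real.sqrt 3 * (d : ℝ) - (c : ℝ)| < (3 * Real.sqrt 3 - 5) / 2 →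
      ∃ d M : ℤ, 0 ≤ d ∧ d < 7 ∧
        |(Real.sqrt 3 * ((p : ℝ) + 2 * (d : ℝ)) - (w : ℝ)) / 2 - (M : ℝ)|
          < (3 * Real.sqrt 3 - 5) / 2 := by
    intro d c hd0 hd7 habs
    refine ⟨d, F + c, hd0, hd7, ?_⟩
    have e : (Real.sqrt 3 * ((p : ℝ) + 2 * (d : ℝ)) - (w : ℝ)) / 2 - ((F + c : ℤ) : ℝ)
        = θ + Real.sqrt 3 * (d : ℝ) - (c : ℝ) := by
      rw [hθ, ht]; push_cast; ring
    rw [e]; exact habs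
  have kiss : ∀ A B : ℤ, 0 < B → θ ≠ ((A : ℝ) - (B : ℝ) * Real.sqrt 3) / 2 := by
    intro A B hB h
    have hne : Real.sqrt 3 * ((p + B : ℤ) : ℝ) ≠ ((A + w + 2 * F : ℤ) : ℝ) :=
      sqrt3_mul_ne _ _ (by omega)
    apply hne
    rw [hθ, ht] at h
    push_cast
    linear_combination 2 * h
  rcases lt_or_ge θ ((3 * Real.sqrt 3 - 5) / 2) with h1 | h1
  · refine key 0 0 (by norm_num) (by norm_num) ?_
    push_cast
    rw [abs_of_nonneg (by linarith)]
    linarith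
  rcases lt_trichotomy θ ((9 - 5 * Real.sqrt 3) / 2) with h2 | h2 | h2
  · refine key 4 7 (by norm_num) (by norm_num) ?_
    push_cast
    rw [abs_lt]
    constructor <;> linarith
  · exact (kiss 9 5 (by norm_num) (by push_cast; exact h2)).elim
  rcases lt_or_ge θ ((Real.sqrt 3 - 1) / 2) with h3 | h3
  · refine key 1 2 (by norm_num) (by norm_num) ?_
    push_cast
    rw [abs_lt]
    constructor <;> linarith
  rcases lt_trichotomy θ ((13 - 7 * Real.sqrt 3) / 2) with h4 | h4 | h4
  · refine key 5 9 (by norm_num) (by norm_num) ?_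
    push_cast
    rw [abs_lt]
    constructor <;> linarith
  · exact (kiss 13 7 (by norm_num) (by push_cast; exact h4)).elim
  rcases lt_or_ge θ ((3 - Real.sqrt 3) / 2) with h5 | h5
  · refine key 2 4 (by norm_num) (by norm_num) ?_
    push_cast
    rw [abs_lt]
    constructor <;> linarith
  rcases lt_trichotomy θ ((17 - 9 * Real.sqrt 3) / 2) with h6 | h6 | h6
  · refine key 6 11 (by norm_num) (by norm_num) ?_
    push_cast
    rw [abs_lt]
    constructor <;> linarith
  · exact (kiss 17 9 (by norm_num) (by push_cast; exact h6)).elim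
  rcases lt_trichotomy θ ((7 - 3 * Real.sqrt 3) / 2) with h7 | h7 | h7
  · refine key 3 6 (by norm_num) (by norm_num) ?_
    push_cast
    rw [abs_lt]
    constructor <;> linarith
  · exact (kiss 7 3 (by norm_num) (by push_cast; exact h7)).elim
  · refine key 0 1 (by norm_num) (by norm_num) ?_
    push_cast
    rw [abs_lt]
    constructor <;> linarith

set_option maxHeartbeats 2000000 in
/-- For every `N > 1000` there are half-integers `x`, `y` with
`‖x − √3·y‖ < ε`, `‖y + √3·x‖ < ε/2` (where `ε = (3√3 − 5)/2`),
`N ≤ x² + y² ≤ N + f(N)` with `f(N) = 49 + 14·√(7√N − 49/4)`, and moreover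
`y ≤ 7 + √(7√N − 49/4)`. -/
theorem find_half_integer_pair (N : ℝ) (hN : 1000 < N) :
    ∃ x y : ℝ, (∃ m : ℤ, 2 * x = (m : ℝ)) ∧ (∃ m : ℤ, 2 * y = (m : ℝ)) ∧
      distNearestInt (x - Real.sqrt 3 * y) < (3 * Real.sqrt 3 - 5) / 2 ∧
      distNearestInt (y + Real.sqrt 3 * x) < (3 * Real.sqrt 3 - 5) / 2 / 2 ∧
      N ≤ x ^ 2 + y ^ 2 ∧
      x ^ 2 + y ^ 2 ≤ N + (49 + 14 * Real.sqrt (7 * Real.sqrt N - 49 / 4)) ∧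
      y ≤ 7 + Real.sqrt (7 * Real.sqrt N - 49 / 4) := by
  have s3l : (1.732 : ℝ) < Real.sqrt 3 := sqrt3_lb
  have s3u : Real.sqrt 3 < 1.7321 := sqrt3_ub
  have hN0 : (0 : ℝ) ≤ N := by linarith
  set SN : ℝ := Real.sqrt N with hSNdef
  have hSN2 : SN ^ 2 = N := Real.sq_sqrt hN0
  have hSN31 : (31 : ℝ) < SN := by
    have h961 : Real.sqrt 961 < SN := Real.sqrt_lt_sqrt (by norm_num) (by linarith)
    have h31 : Real.sqrt 961 = 31 := by
      rw [show (961 : ℝ) = 31 ^ 2 by norm_num, Real.sqrt_sq (by norm_num)]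
    linarith
  set T : ℝ := Real.sqrt (7 * SN - 49 / 4) with hTdef
  have hTarg : (0 : ℝ) ≤ 7 * SN - 49 / 4 := by linarith
  have hT0 : 0 ≤ T := Real.sqrt_nonneg _
  have hT2 : T ^ 2 = 7 * SN - 49 / 4 := Real.sq_sqrt hTarg
  -- choose k
  set n₀ : ℤ := ⌈2 * SN⌉ - 7 with hn₀def
  have hn₀R : (n₀ : ℝ) ≥ 2 * SN - 7 := by
    have h := Int.le_ceil (2 * SN)
    rw [hn₀def]
    push_cast
    linarith
  have hn₀pos : 0 < n₀ := by
    have h : (0 : ℝ) < (n₀ : ℝ) := by linarith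
    exact_mod_cast h
  obtain ⟨d, K, hd0, hd7, hkraw⟩ := master (2 * n₀) 0 (by omega)
  set k : ℤ := n₀ + d with hkdef
  have hkre : |Real.sqrt 3 * (k : ℝ) - (K : ℝ)| < (3 * Real.sqrt 3 - 5) / 2 := by
    have e : (Real.sqrt 3 * (((2 * n₀ : ℤ) : ℝ) + 2 * (d : ℝ)) - ((0 : ℤ) : ℝ)) / 2 - (K : ℝ)
        = Real.sqrt 3 * (k : ℝ) - (K : ℝ) := by
      rw [hkdef]; push_cast; ring
    rwa [e] at hkraw
  have hklow : 2 * SN - 7 ≤ (k : ℝ) := by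
    have hd0R : (0 : ℝ) ≤ (d : ℝ) := by exact_mod_cast hd0
    rw [hkdef]; push_cast; linarith
  have hkhigh : (k : ℝ) < 2 * SN := by
    have hd6R : (d : ℝ) ≤ 6 := by exact_mod_cast (by omega : d ≤ 6)
    have hceil : ((⌈2 * SN⌉ : ℤ) : ℝ) < 2 * SN + 1 := Int.ceil_lt_add_one _
    rw [hkdef, hn₀def]; push_cast; push_cast at hceil; linarith
  have hkpos : (0 : ℝ) < (k : ℝ) := by linarith
  -- the deficit D
  set D : ℝ := 4 * N - (k : ℝ) ^ 2 with hDdef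
  have hD0 : 0 < D := by
    rw [hDdef]
    nlinarith [hSN2, hkhigh, hkpos]
  have hDle : D ≤ 28 * SN - 49 := by
    rw [hDdef]
    nlinarith [hSN2, hklow, hSN31]
  set s : ℝ := Real.sqrt D with hsdef
  have hs0 : 0 < s := Real.sqrt_pos.2 hD0
  have hs2 : s ^ 2 = D := Real.sq_sqrt hD0.le
  have hs2T : s ≤ 2 * T := by
    nlinarith [hs2, hT2, hDle, hs0.le, hT0]
  -- parities
  set u : ℤ := K % 2 with hudef
  set v : ℤ := k % 2 with hvdef
  have hu01 : 0 ≤ u ∧ u ≤ 1 := by constructor <;> omega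
  have hv01 : 0 ≤ v ∧ v ≤ 1 := by constructor <;> omega
  have huR0 : (0 : ℝ) ≤ (u : ℝ) := by exact_mod_cast hu01.1
  have huR1 : (u : ℝ) ≤ 1 := by exact_mod_cast hu01.2
  -- choose l
  set m₀ : ℤ := ⌈(s - (u : ℝ)) / 2⌉ with hm₀def
  have hm₀R : ((m₀ : ℝ)) ≥ (s - (u : ℝ)) / 2 := by
    rw [hm₀def]; exact Int.le_ceil _
  have hm₀Rhigh : ((m₀ : ℝ)) < (s - (u : ℝ)) / 2 + 1 := by
    rw [hm₀def]; exact Int.ceil_lt_add_one _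
  have hm₀0 : 0 ≤ m₀ := by
    have h : (-1 : ℝ) < (m₀ : ℝ) := by linarith
    have h' : (-1 : ℤ) < m₀ := by exact_mod_cast h
    omega
  obtain ⟨d', M', hd'0, hd'7, hlraw⟩ := master (2 * m₀ + u) v (by omega)
  set l : ℤ := 2 * (m₀ + d') + u with hldef
  set L : ℤ := 2 * M' + v with hLdef
  have hlre : |Real.sqrt 3 * (l : ℝ) - (L : ℝ)| < 3 * Real.sqrt 3 - 5 := by
    have e : Real.sqrt 3 * (l : ℝ) - (L : ℝ)
        = 2 * ((Real.sqrt 3 * (((2 * m₀ + u : ℤ) : ℝ) + 2 * ((d' : ℤ) : ℝ)) - ((v : ℤ) : ℝ)) / 2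
            - ((M' : ℤ) : ℝ)) := by
      rw [hldef, hLdef]; push_cast; ring
    rw [e, abs_mul, abs_two]
    linarith [hlraw]
  have hd'0R : (0 : ℝ) ≤ ((d' : ℤ) : ℝ) := by exact_mod_cast hd'0
  have hd'6R : ((d' : ℤ) : ℝ) ≤ 6 := by exact_mod_cast (by omega : d' ≤ 6)
  have hllow : s ≤ (l : ℝ) := by
    rw [hldef]; push_cast; linarith
  have hlhigh : (l : ℝ) < s + 14 := by
    rw [hldef]; push_cast; linarith
  -- integer midpoints
  have hdvd1 : 2 ∣ (k - L) := by
    have hv' : v = k % 2 := hvdef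
    rw [hLdef]; omega
  have hdvd2 : 2 ∣ (l + K) := by
    have hu' : u = K % 2 := hudef
    rw [hldef]; omega
  obtain ⟨J1, hJ1⟩ := hdvd1
  obtain ⟨J2, hJ2⟩ := hdvd2
  have hJ1R : (k : ℝ) - (L : ℝ) = 2 * (J1 : ℝ) := by exact_mod_cast congrArg (Int.cast : ℤ → ℝ) hJ1
  have hJ2R : (l : ℝ) + (K : ℝ) = 2 * (J2 : ℝ) := by exact_mod_cast congrArg (Int.cast : ℤ → ℝ) hJ2
  -- epsilon bound
  have heps : (3 * Real.sqrt 3 - 5) / 2 ≤ 1 / 2 := by linarith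
  refine ⟨(k : ℝ) / 2, (l : ℝ) / 2, ⟨k, by ring⟩, ⟨l, by ring⟩, ?_, ?_, ?_, ?_, ?_⟩
  · -- ‖x - √3 y‖ < ε
    apply dni_lt (n := J1) heps
    have e : (k : ℝ) / 2 - Real.sqrt 3 * ((l : ℝ) / 2) - (J1 : ℝ)
        = -((Real.sqrt 3 * (l : ℝ) - (L : ℝ)) / 2) := by
      linear_combination (1 / 2) * hJ1R
    rw [e, abs_neg, abs_div, abs_two]
    linarith [hlre]
  · -- ‖y + √3 x‖ < ε/2
    apply dni_lt (n := J2) (by linarith)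
    have e : (l : ℝ) / 2 + Real.sqrt 3 * ((k : ℝ) / 2) - (J2 : ℝ)
        = (Real.sqrt 3 * (k : ℝ) - (K : ℝ)) / 2 := by
      linear_combination (1 / 2) * hJ2R
    rw [e, abs_div, abs_two]
    linarith [hkre]
  · -- N ≤ x² + y²
    have hl2 : D ≤ (l : ℝ) ^ 2 := by nlinarith [hllow, hs0.le, hs2]
    have hk2 : (k : ℝ) ^ 2 = 4 * N - D := by rw [hDdef]; ring
    nlinarith [hl2, hk2]
  · -- x² + y² ≤ N + f
    have hl2 : (l : ℝ) ^ 2 ≤ (s + 14) ^ 2 := by nlinarith [hllow, hlhigh, hs0.le]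
    have hk2 : (k : ℝ) ^ 2 = 4 * N - D := by rw [hDdef]; ring
    nlinarith [hl2, hk2, hs2, hs2T, hT0]
  · -- y ≤ 7 + T
    linarith [hlhigh, hs2T]
end
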